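/- Let d be a random variable with density f_d(r) = 2r/(ρ² - ξ²) on [ξ, ρ], and let Z₁ be exponentially distributed with mean L (L a positive integer), independent of d. For Y > 0 and α > 2, P(Z₁ < Y d^{2α}) = 1 - (L^{1/α}/(α(ρ²-ξ²) Y^{1/α})) [Γ(1/α, (Y/L) ξ^{2α}) - Γ(1/α, (Y/L) ρ^{2α})]. -/

import Mathlib

/-!
With `c = Y / L`, the integrand is the density `2r / (ρ² - ξ²)` minus `exp (-c r^{2α}) · 2r / (ρ² - ξ²)`.
The density integrates to `1`, and the substitution `t = c r^{2α}` turns `exp (-c r^{2α}) · 2r dr`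
into `(α c^{1/α})⁻¹ t^{1/α - 1} e^{-t} dt`, whose integral over `[c ξ^{2α}, c ρ^{2α}]` is a
difference of two upper incomplete gamma values.
-/

open Real

/-- Upper incomplete gamma function. -/
noncomputable def upperGamma (a x : ℝ) : ℝ := ∫ t in Set.Ioi x, t ^ (a - 1) * Real.exp (-t)

open MeasureTheory Set intervalIntegral

lemma integrableOn_rpow_mul_exp_neg_Ioi {a x : ℝ} (ha : 0 < a) (hx : 0 ≤ x) :
    IntegrableOn (fun t : ℝ => t ^ (a - 1) * exp (-t)) (Ioi x) := by
  simpa only [mul_comm] using (GammaIntegral_convergent ha).mono_set (Ioi_subset_Ioi hx)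

lemma upperGamma_sub_upperGamma {a x₁ x₂ : ℝ} (ha : 0 < a) (hx₁ : 0 ≤ x₁) (hx₂ : 0 ≤ x₂) :
    upperGamma a x₁ - upperGamma a x₂ = ∫ t in x₁..x₂, t ^ (a - 1) * exp (-t) :=
  integral_Ioi_sub_Ioi' (integrableOn_rpow_mul_exp_neg_Ioi ha hx₁)
    (integrableOn_rpow_mul_exp_neg_Ioi ha hx₂)

lemma mul_rpow_inv_sub_one_mul_deriv {c r α : ℝ} (hc : 0 < c) (hr : 0 < r) (hα : α ≠ 0) :
    (c * r ^ (2 * α)) ^ (1 / α - 1) * (c * (2 * α * r ^ (2 * α - 1))) =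
      2 * α * c ^ (1 / α) * r := by
  have hc' : c ^ (1 / α - 1) * c = c ^ (1 / α) := by
    rw [← rpow_add_one hc.ne']; ring_nf
  have hr' : r ^ (2 * α * (1 / α - 1)) * r ^ (2 * α - 1) = r := by
    rw [← rpow_add hr]; field_simp; ring_nf; exact rpow_one r
  rw [mul_rpow hc.le (rpow_nonneg hr.le _), ← rpow_mul hr.le]
  linear_combination (2 * α * r ^ (2 * α * (1 / α - 1)) * r ^ (2 * α - 1)) * hc' +
    (2 * α * c ^ (1 / α)) * hr'

lemma integral_exp_neg_mul_rpow_mul_two_mul {c α ξ ρ : ℝ} (hc : 0 < c) (hα : α ≠ 0)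
    (hξ : 0 < ξ) (hρ : 0 < ρ) :
    ∫ r in ξ..ρ, exp (-(c * r ^ (2 * α))) * (2 * r) =
      (α * c ^ (1 / α))⁻¹ * ∫ t in c * ξ ^ (2 * α)..c * ρ ^ (2 * α), t ^ (1 / α - 1) * exp (-t) := by
  have hpos : ∀ r ∈ uIcc ξ ρ, 0 < r := fun r hr => lt_of_lt_of_le (lt_min hξ hρ) hr.1
  have hderiv : ∀ r ∈ uIcc ξ ρ,
      HasDerivAt (fun r => c * r ^ (2 * α)) (c * (2 * α * r ^ (2 * α - 1))) r := fun r hr =>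
    ((hasDerivAt_rpow_const (Or.inl (hpos r hr).ne')).const_mul c)
  have himage : ∀ t ∈ (fun r => c * r ^ (2 * α)) '' uIcc ξ ρ, t ≠ 0 := by
    rintro _ ⟨r, hr, rfl⟩
    exact (mul_pos hc (rpow_pos_of_pos (hpos r hr) _)).ne'
  have hsubst := integral_comp_mul_deriv' hderiv
    (continuousOn_const.mul (continuousOn_const.mul
      (continuousOn_id.rpow_const fun r hr => Or.inl (hpos r hr).ne')))
    (g := fun t => t ^ (1 / α - 1) * exp (-t))
    ((continuousOn_id.rpow_const fun t ht => Or.inl (himage t ht)).mul (by fun_prop))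
  rw [← hsubst, ← intervalIntegral.integral_const_mul]
  refine integral_congr fun r hr => ?_
  have hαc : α * c ^ (1 / α) ≠ 0 := mul_ne_zero hα (rpow_pos_of_pos hc _).ne'
  simp only [Function.comp_apply]
  rw [mul_right_comm, mul_rpow_inv_sub_one_mul_deriv hc (hpos r hr) hα]
  field_simp

lemma integral_one_sub_exp_neg_mul_rpow_mul_two_mul {c α ξ ρ : ℝ} (hc : 0 < c) (hα : 0 < α)
    (hξ : 0 < ξ) (hρ : 0 < ρ) :
    ∫ r in ξ..ρ, (1 - exp (-(c * r ^ (2 * α)))) * (2 * r) =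
      ρ ^ 2 - ξ ^ 2 - (α * c ^ (1 / α))⁻¹ *
        (upperGamma (1 / α) (c * ξ ^ (2 * α)) - upperGamma (1 / α) (c * ρ ^ (2 * α))) := by
  have hpos : ∀ r ∈ uIcc ξ ρ, 0 < r := fun r hr => lt_of_lt_of_le (lt_min hξ hρ) hr.1
  have hexp : IntervalIntegrable (fun r => exp (-(c * r ^ (2 * α))) * (2 * r)) volume ξ ρ :=
    ContinuousOn.intervalIntegrable <| ContinuousOn.mul
      (continuousOn_const.mul (continuousOn_id.rpow_const fun r hr => Or.inl (hpos r hr).ne')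
        |>.neg.rexp) (by fun_prop)
  simp only [sub_mul, one_mul]
  rw [integral_sub ((continuous_const_mul 2).intervalIntegrable _ _) hexp,
    intervalIntegral.integral_const_mul, integral_id,
    integral_exp_neg_mul_rpow_mul_two_mul hc hα.ne' hξ hρ,
    upperGamma_sub_upperGamma (by positivity) (by positivity) (by positivity)]
  ring

/-- Idle probability of the RF-combiner: averaging the exponential(mean L) CDF at the
    threshold Y d^{2α} over the distance density f_d(r) = 2r/(ρ²-ξ²) on [ξ,ρ]:
    P(Z₁ < Y d^{2α}) = 1 - (L^{1/α}/(α(ρ²-ξ²)Y^{1/α})) [Γ(1/α,(Y/L)ξ^{2α}) - Γ(1/α,(Y/L)ρ^{2α})]. -/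
theorem rf_idle_probability (Y α ξ ρ : ℝ) (L : ℕ) (hL : 0 < L) (hY : 0 < Y)
    (hα : 2 < α) (hξ : 0 < ξ) (hξρ : ξ < ρ) :
    ∫ r in ξ..ρ, (1 - Real.exp (-(Y * r ^ (2 * α)) / L)) * (2 * r / (ρ ^ 2 - ξ ^ 2)) =
      1 - ((L : ℝ) ^ (1 / α) / (α * (ρ ^ 2 - ξ ^ 2) * Y ^ (1 / α))) *
        (upperGamma (1 / α) ((Y / L) * ξ ^ (2 * α)) -
          upperGamma (1 / α) ((Y / L) * ρ ^ (2 * α))) := by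
  have hL' : (0 : ℝ) < L := Nat.cast_pos.mpr hL
  have hD : 0 < ρ ^ 2 - ξ ^ 2 := by nlinarith
  have hintegrand : ∀ r : ℝ, (1 - exp (-(Y * r ^ (2 * α)) / L)) * (2 * r / (ρ ^ 2 - ξ ^ 2)) =
      (1 - exp (-(Y / L * r ^ (2 * α)))) * (2 * r) / (ρ ^ 2 - ξ ^ 2) := fun r => by
    rw [neg_div, mul_div_right_comm, ← mul_div_assoc]
  simp_rw [hintegrand]
  rw [intervalIntegral.integral_div, integral_one_sub_exp_neg_mul_rpow_mul_two_mul
      (div_pos hY hL') (by linarith) hξ (hξ.trans hξρ), div_rpow hY.le hL'.le]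
  have hYα : 0 < Y ^ (1 / α) := rpow_pos_of_pos hY _
  have hLα : 0 < (L : ℝ) ^ (1 / α) := rpow_pos_of_pos hL' _
  field_simp
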